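/- arXiv:2109.07444 — 8 statements merged into one kernel-verified Lean document; each statement's English description precedes it below -/
import Mathlib

section
/- Let a, b, c, d be affinely independent points of EuclideanSpace ℝ (Fin 3). Then there exists a vertex v ∈ {a,b,c,d} such that, writing F for the face opposite v (the triangle on the other three vertices), for every vertex w of F, letting x and y be the two remaining vertices of F, one has ∠ v w x + ∠ v w y ≤ π. (Equivalently: some face of the tetrahedron has all three of its 'exterior' angle-pairs summing to at most π, so its boundary is a simple closed quasigeodesic through three vertices.) -/
/-!
Say that vertex `v` points to vertex `w` when the two angles at `w` between the edge `w v` and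
the other two edges at `w` add up to more than `π`. If the theorem failed, every vertex would
point to some other one, so following the arrows inside the four vertices closes a cycle of
length 2, 3 or 4. Along such a cycle the angle sums add up to more than `π` times its length,
whereas the angle sums of the triangles involved (and, for a 3-cycle, the triangle inequality
for angles at the three cycle vertices) bound that total by `π` times the length.
-/

open EuclideanGeometry Real Finset

theorem Fin.exists_rel_cycle_of_forall_exists (R : Fin 4 → Fin 4 → Prop)
    (h : ∀ i, ∃ j, j ≠ i ∧ R i j) :
    (∃ i j, i ≠ j ∧ R i j ∧ R j i) ∨
    (∃ i j k, i ≠ j ∧ j ≠ k ∧ k ≠ i ∧ R i j ∧ R j k ∧ R k i) ∨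
    (∃ i j k l, i ≠ j ∧ i ≠ k ∧ i ≠ l ∧ j ≠ k ∧ j ≠ l ∧ k ≠ l ∧
      R i j ∧ R j k ∧ R k l ∧ R l i) := by
  obtain ⟨i₁, h₁, r₀⟩ := h 0
  obtain ⟨i₂, h₂, r₁⟩ := h i₁
  obtain ⟨i₃, h₃, r₂⟩ := h i₂
  obtain ⟨i₄, h₄, r₃⟩ := h i₃
  rcases eq_or_ne i₂ 0 with rfl | h20
  · exact .inl ⟨_, _, h₁.symm, r₀, r₁⟩
  rcases eq_or_ne i₃ i₁ with rfl | h31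
  · exact .inl ⟨_, _, h₂.symm, r₁, r₂⟩
  rcases eq_or_ne i₃ 0 with rfl | h30
  · exact .inr <| .inl ⟨_, _, _, h₁.symm, h₂.symm, h20, r₀, r₁, r₂⟩
  rcases eq_or_ne i₄ i₂ with rfl | h42
  · exact .inl ⟨_, _, h₃.symm, r₂, r₃⟩
  rcases eq_or_ne i₄ i₁ with rfl | h41
  · exact .inr <| .inl ⟨_, _, _, h₂.symm, h₃.symm, h31, r₁, r₂, r₃⟩
  rcases eq_or_ne i₄ 0 with rfl | h40
  · exact .inr <| .inr ⟨_, _, _, _, h₁.symm, h20.symm, h30.symm, h₂.symm, h31.symm,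
      h₃.symm, r₀, r₁, r₂, r₃⟩
  -- `0, i₁, i₂, i₃, i₄` would be five distinct elements of `Fin 4`
  omega

section

variable {V P : Type*} [NormedAddCommGroup V] [InnerProductSpace ℝ V] [MetricSpace P]
  [NormedAddTorsor V P]

theorem EuclideanGeometry.angle_add_angle_le_pi {p₁ p₂ : P} (p₃ : P) (h : p₂ ≠ p₁) :
    ∠ p₁ p₂ p₃ + ∠ p₂ p₁ p₃ ≤ π := by
  have := angle_add_angle_add_angle_eq_pi p₃ h
  linarith [angle_comm p₃ p₁ p₂, angle_nonneg p₂ p₃ p₁]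

theorem EuclideanGeometry.angle_add_angle_add_angle_le_two_pi {x y z : P} (u : P)
    (hxy : x ≠ y) (hyz : y ≠ z) (hzx : z ≠ x) :
    ∠ x y u + ∠ y z u + ∠ z x u ≤ 2 * π := by
  have := angle_add_angle_add_angle_eq_pi u hxy
  have := angle_add_angle_add_angle_eq_pi u hyz
  have := angle_add_angle_add_angle_eq_pi u hzx
  have := angle_add_angle_add_angle_eq_pi z hxy.symm
  linarith [angle_le_angle_add_angle y x z u, angle_le_angle_add_angle z y x u,
    angle_le_angle_add_angle x z y u, angle_comm x y u, angle_comm y z u, angle_comm z x u,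
    angle_nonneg x u y, angle_nonneg y u z, angle_nonneg z u x]

/-- The face of the tetrahedron `p` opposite `p i` is quasigeodesic at its vertex `p j` iff
`edgeAngleSum p i j ≤ π`. -/
noncomputable def edgeAngleSum (p : Fin 4 → P) (i j : Fin 4) : ℝ :=
  ∑ k ∈ {i, j}ᶜ, ∠ (p i) (p j) (p k)

variable {p : Fin 4 → P} {i j k l : Fin 4}

theorem edgeAngleSum_eq (p : Fin 4 → P) (hij : i ≠ j) (hik : i ≠ k) (hil : i ≠ l)
    (hjk : j ≠ k) (hjl : j ≠ l) (hkl : k ≠ l) :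
    edgeAngleSum p i j = ∠ (p i) (p j) (p k) + ∠ (p i) (p j) (p l) := by
  have : ({i, j}ᶜ : Finset (Fin 4)) = {k, l} := by
    ext m
    simp only [mem_compl, mem_insert, mem_singleton]
    omega
  rw [edgeAngleSum, this, sum_pair hkl]

theorem edgeAngleSum_add_edgeAngleSum_le (hp : Function.Injective p) (hij : i ≠ j) :
    edgeAngleSum p i j + edgeAngleSum p j i ≤ 2 * π := by
  have hcard : #({i, j}ᶜ : Finset (Fin 4)) = 2 := by
    rw [card_compl, card_pair hij, Fintype.card_fin]
  calc edgeAngleSum p i j + edgeAngleSum p j i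
      = ∑ k ∈ {i, j}ᶜ, (∠ (p i) (p j) (p k) + ∠ (p j) (p i) (p k)) := by
        rw [edgeAngleSum, edgeAngleSum, pair_comm j i, sum_add_distrib]
    _ ≤ ∑ _k ∈ ({i, j}ᶜ : Finset (Fin 4)), π :=
        sum_le_sum fun k _ => angle_add_angle_le_pi (p k) (hp.ne hij.symm)
    _ = 2 * π := by rw [sum_const, hcard, nsmul_eq_mul, Nat.cast_ofNat]

theorem edgeAngleSum_three_cycle_le (hp : Function.Injective p) (hij : i ≠ j) (hjk : j ≠ k)
    (hki : k ≠ i) :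
    edgeAngleSum p i j + edgeAngleSum p j k + edgeAngleSum p k i ≤ 3 * π := by
  obtain ⟨l, -, hl⟩ := exists_mem_notMem_of_card_lt_card
    (card_le_three.trans_lt (by simp) : #({i, j, k} : Finset (Fin 4)) < #univ)
  simp only [mem_insert, mem_singleton, not_or] at hl
  obtain ⟨hli, hlj, hlk⟩ := hl
  rw [edgeAngleSum_eq p hij hki.symm (Ne.symm hli) hjk (Ne.symm hlj) (Ne.symm hlk),
    edgeAngleSum_eq p hjk hij.symm (Ne.symm hlj) hki (Ne.symm hlk) (Ne.symm hli),
    edgeAngleSum_eq p hki hjk.symm (Ne.symm hlk) hij (Ne.symm hli) (Ne.symm hlj)]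
  have := angle_add_angle_add_angle_eq_pi (p k) (hp.ne hij.symm)
  have := angle_add_angle_add_angle_le_two_pi (p l) (hp.ne hij) (hp.ne hjk) (hp.ne hki)
  linarith

theorem edgeAngleSum_four_cycle_le (hp : Function.Injective p) (hij : i ≠ j) (hik : i ≠ k)
    (hil : i ≠ l) (hjk : j ≠ k) (hjl : j ≠ l) (hkl : k ≠ l) :
    edgeAngleSum p i j + edgeAngleSum p j k + edgeAngleSum p k l + edgeAngleSum p l i ≤
      4 * π := by
  rw [edgeAngleSum_eq p hij hik hil hjk hjl hkl,
    edgeAngleSum_eq p hjk hjl hij.symm hkl hik.symm hil.symm,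
    edgeAngleSum_eq p hkl hik.symm hjk.symm hil.symm hjl.symm hij,
    edgeAngleSum_eq p hil.symm hjl.symm hkl.symm hij hik hjk]
  have := angle_add_angle_add_angle_eq_pi (p k) (hp.ne hij.symm)
  have := angle_add_angle_add_angle_eq_pi (p l) (hp.ne hjk.symm)
  have := angle_add_angle_add_angle_eq_pi (p i) (hp.ne hkl.symm)
  have := angle_add_angle_add_angle_eq_pi (p j) (hp.ne hil)
  linarith [angle_nonneg (p k) (p i) (p j), angle_nonneg (p l) (p j) (p k),
    angle_nonneg (p i) (p k) (p l), angle_nonneg (p j) (p l) (p i)]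

theorem exists_forall_edgeAngleSum_le_pi (hp : Function.Injective p) :
    ∃ i, ∀ j, j ≠ i → edgeAngleSum p i j ≤ π := by
  by_contra! h
  rcases Fin.exists_rel_cycle_of_forall_exists _ h with
    ⟨i, j, hij, hR⟩ | ⟨i, j, k, hij, hjk, hki, hR⟩ |
      ⟨i, j, k, l, hij, hik, hil, hjk, hjl, hkl, hR⟩
  · linarith [edgeAngleSum_add_edgeAngleSum_le hp hij]
  · linarith [edgeAngleSum_three_cycle_le hp hij hjk hki]
  · linarith [edgeAngleSum_four_cycle_le hp hij hik hil hjk hjl hkl]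

theorem exists_vertex_forall_angle_add_angle_le_pi (hp : Function.Injective p) :
    ∃ i, ∀ j k l, [i, j, k, l].Nodup → ∠ (p i) (p j) (p k) + ∠ (p i) (p j) (p l) ≤ π := by
  obtain ⟨i, hi⟩ := exists_forall_edgeAngleSum_le_pi hp
  refine ⟨i, fun j k l hn => ?_⟩
  simp only [List.nodup_cons, List.mem_cons, List.not_mem_nil, not_or] at hn
  obtain ⟨⟨hij, hik, hil, -⟩, ⟨hjk, hjl, -⟩, ⟨hkl, -⟩, -⟩ := hn
  rw [← edgeAngleSum_eq p hij hik hil hjk hjl hkl]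
  exact hi j (Ne.symm hij)

end

/-- Every tetrahedron has a vertex `v` such that the face opposite `v`
has all three "exterior" angle pairs summing to at most `π`, so its
boundary is a simple closed quasigeodesic through three vertices. -/
theorem exists_face_quasigeodesic
    (a b c d : EuclideanSpace ℝ (Fin 3))
    (h : AffineIndependent ℝ ![a, b, c, d]) :
    (∠ a b c + ∠ a b d ≤ π ∧ ∠ a c b + ∠ a c d ≤ π ∧ ∠ a d b + ∠ a d c ≤ π) ∨
    (∠ b a c + ∠ b a d ≤ π ∧ ∠ b c a + ∠ b c d ≤ π ∧ ∠ b d a + ∠ b d c ≤ π) ∨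
    (∠ c a b + ∠ c a d ≤ π ∧ ∠ c b a + ∠ c b d ≤ π ∧ ∠ c d a + ∠ c d b ≤ π) ∨
    (∠ d a b + ∠ d a c ≤ π ∧ ∠ d b a + ∠ d b c ≤ π ∧ ∠ d c a + ∠ d c b ≤ π) := by
  obtain ⟨i, hi⟩ := exists_vertex_forall_angle_add_angle_le_pi h.injective
  fin_cases i
  · exact .inl ⟨hi 1 2 3 (by decide), hi 2 1 3 (by decide), hi 3 1 2 (by decide)⟩
  · exact .inr <| .inl ⟨hi 0 2 3 (by decide), hi 2 0 3 (by decide), hi 3 0 2 (by decide)⟩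
  · exact .inr <| .inr <| .inl ⟨hi 0 1 3 (by decide), hi 1 0 3 (by decide), hi 3 0 1 (by decide)⟩
  · exact .inr <| .inr <| .inr ⟨hi 0 1 2 (by decide), hi 1 0 2 (by decide), hi 2 0 1 (by decide)⟩
end

section
/- Assume in addition that the triangle inequality holds strictly at each vertex: each of the three angles at a vertex v is strictly less than the sum of the other two (e.g. aB < aC + aD, bD < bA + bC, etc., for all twelve such inequalities). Then at least one face does not fail at any of its vertices; i.e., one of the following holds: (bC+bD ≤ π ∧ cB+cD ≤ π ∧ dB+dC ≤ π) [face A], or (aC+aD ≤ π ∧ cA+cD ≤ π ∧ dA+dC ≤ π) [face B], or (aB+aD ≤ π ∧ bA+bD ≤ π ∧ dA+dB ≤ π) [face C], or (aB+aC ≤ π ∧ bA+bC ≤ π ∧ cA+cB ≤ π) [face D]. -/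
open Real

/-- If the twelve face angles of a tetrahedron are positive, the angles of
each face sum to `π`, and the strict triangle inequality holds among the
three angles at each vertex, then some face does not fail at any of its
vertices. -/
theorem exists_nonfailing_face
    (aB aC aD bA bC bD cA cB cD dA dB dC : ℝ)
    (haB : 0 < aB) (haC : 0 < aC) (haD : 0 < aD)
    (hbA : 0 < bA) (hbC : 0 < bC) (hbD : 0 < bD)
    (hcA : 0 < cA) (hcB : 0 < cB) (hcD : 0 < cD)
    (hdA : 0 < dA) (hdB : 0 < dB) (hdC : 0 < dC)
    (hA : bA + cA + dA = π) (hB : aB + cB + dB = π)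
    (hC : aC + bC + dC = π) (hD : aD + bD + cD = π)
    (ta1 : aB < aC + aD) (ta2 : aC < aB + aD) (ta3 : aD < aB + aC)
    (tb1 : bA < bC + bD) (tb2 : bC < bA + bD) (tb3 : bD < bA + bC)
    (tc1 : cA < cB + cD) (tc2 : cB < cA + cD) (tc3 : cD < cA + cB)
    (td1 : dA < dB + dC) (td2 : dB < dA + dC) (td3 : dC < dA + dB) :
    (bC + bD ≤ π ∧ cB + cD ≤ π ∧ dB + dC ≤ π) ∨
    (aC + aD ≤ π ∧ cA + cD ≤ π ∧ dA + dC ≤ π) ∨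
    (aB + aD ≤ π ∧ bA + bD ≤ π ∧ dA + dB ≤ π) ∨
    (aB + aC ≤ π ∧ bA + bC ≤ π ∧ cA + cB ≤ π) := by
  by_contra h
  have hA' : π < bC + bD ∨ π < cB + cD ∨ π < dB + dC := by
    by_contra hc; push_neg at hc; exact h (Or.inl ⟨hc.1, hc.2.1, hc.2.2⟩)
  have hB' : π < aC + aD ∨ π < cA + cD ∨ π < dA + dC := by
    by_contra hc; push_neg at hc; exact h (Or.inr (Or.inl ⟨hc.1, hc.2.1, hc.2.2⟩))
  have hC' : π < aB + aD ∨ π < bA + bD ∨ π < dA + dB := by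
    by_contra hc; push_neg at hc; exact h (Or.inr (Or.inr (Or.inl ⟨hc.1, hc.2.1, hc.2.2⟩)))
  have hD' : π < aB + aC ∨ π < bA + bC ∨ π < cA + cB := by
    by_contra hc; push_neg at hc; exact h (Or.inr (Or.inr (Or.inr ⟨hc.1, hc.2.1, hc.2.2⟩)))
  rcases hA' with h1|h1|h1 <;> rcases hB' with h2|h2|h2 <;>
    rcases hC' with h3|h3|h3 <;> rcases hD' with h4|h4|h4 <;> linarith
end

section
/- Let a, b, c, d be affinely independent points of EuclideanSpace ℝ (Fin 3). Then the three face angles incident to a vertex satisfy the strict triangle inequality; in particular ∠ d a b < ∠ d a c + ∠ c a b. -/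
open EuclideanGeometry

open scoped NNReal

/-!
Mathlib's triangle inequality `∠ x z ≤ ∠ x y + ∠ y z` for angles between vectors is an equality
only if `∠ x z = π` or `y` lies in the cone spanned by `x` and `z`. At a vertex of a
nondegenerate tetrahedron the three edge vectors are linearly independent, which rules out both.
-/

namespace InnerProductGeometry

variable {V : Type*} [NormedAddCommGroup V] [InnerProductSpace ℝ V]

theorem angle_lt_angle_add_angle_of_linearIndependent {x y z : V}
    (h : LinearIndependent ℝ ![x, y, z]) : angle x z < angle x y + angle y z := by
  have hxz : LinearIndependent ℝ ![x, z] := by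
    convert h.comp ![0, 2] (by decide) using 1
    ext i; fin_cases i <;> rfl
  have hy : y ∉ Submodule.span ℝ {x, z} := by
    simpa [Set.image_insert_eq] using h.notMem_span_image (s := {0, 2}) (x := 1) (by decide)
  refine (angle_le_angle_add_angle x y z).lt_of_ne fun heq => ?_
  rcases (angle_eq_angle_add_angle_iff (h.ne_zero 1)).1 heq with hπ | hcone
  · obtain ⟨-, r, -, rfl⟩ := angle_eq_pi_iff.1 hπ
    exact (LinearIndependent.pair_iff' (hxz.ne_zero 0)).1 hxz r rfl
  · exact hy (Submodule.span_le_restrictScalars ℝ≥0 ℝ _ hcone)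

end InnerProductGeometry

namespace EuclideanGeometry

variable {V P : Type*} [NormedAddCommGroup V] [InnerProductSpace ℝ V] [MetricSpace P]
  [NormedAddTorsor V P]

theorem angle_lt_angle_add_angle_of_affineIndependent {p p₁ p₂ p₃ : P}
    (h : AffineIndependent ℝ ![p, p₁, p₂, p₃]) : ∠ p₁ p p₃ < ∠ p₁ p p₂ + ∠ p₂ p p₃ := by
  refine InnerProductGeometry.angle_lt_angle_add_angle_of_linearIndependent ?_
  rw [affineIndependent_iff_linearIndependent_vsub ℝ _ (0 : Fin 4),
    ← linearIndependent_equiv (finSuccAboveEquiv (0 : Fin 4))] at h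
  convert h using 1
  · ext i
    fin_cases i <;> rfl
  · rfl

end EuclideanGeometry

/-- The three face angles incident to a vertex of a nondegenerate tetrahedron
satisfy the strict triangle inequality. -/
theorem vertex_angles_strict_triangle_inequality
    (a b c d : EuclideanSpace ℝ (Fin 3))
    (h : AffineIndependent ℝ ![a, b, c, d]) :
    ∠ d a b < ∠ d a c + ∠ c a b := by
  rw [angle_comm d a b, angle_comm d a c, angle_comm c a b, add_comm]
  exact angle_lt_angle_add_angle_of_affineIndependent h
end

section
/- Let a, b, c, d be affinely independent points of EuclideanSpace ℝ (Fin 3). Then the total curvature of the tetrahedron is 4π: (2π − (∠ c a d + ∠ d a b + ∠ b a c)) + (2π − (∠ d b c + ∠ a b d + ∠ a b c)) + (2π − (∠ b c d + ∠ d c a + ∠ a c b)) + (2π − (∠ b d c + ∠ c d a + ∠ a d b)) = 4π. Equivalently, the twelve face angles of a nondegenerate tetrahedron sum to 4π. -/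
open EuclideanGeometry Real

/-! Each of the four faces is a triangle with angle sum `π`, so the twelve face angles sum to `4π`
and the four vertex curvatures to `4 · 2π - 4π = 4π`. A triangle only needs two distinct
vertices for its angle sum to be `π`, and two disjoint edges `ab`, `cd` meet every face. -/

section

variable {V P : Type*} [NormedAddCommGroup V] [InnerProductSpace ℝ V] [MetricSpace P]
  [NormedAddTorsor V P]

theorem face_angles_sum_eq_four_pi {a b c d : P} (hab : a ≠ b) (hcd : c ≠ d) :
    (∠ c a d + ∠ d a b + ∠ b a c) + (∠ d b c + ∠ a b d + ∠ a b c) +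
      (∠ b c d + ∠ d c a + ∠ a c b) + (∠ b d c + ∠ c d a + ∠ a d b) = 4 * π := by
  have abc := angle_add_angle_add_angle_eq_pi c hab.symm
  have abd := angle_add_angle_add_angle_eq_pi d hab.symm
  have cda := angle_add_angle_add_angle_eq_pi a hcd.symm
  have cdb := angle_add_angle_add_angle_eq_pi b hcd.symm
  linarith [angle_comm b c a, angle_comm c a b, angle_comm b d a, angle_comm d a c,
    angle_comm a c d, angle_comm c d b]

end

/-- The total curvature of a nondegenerate tetrahedron is `4π`;
equivalently, its twelve face angles sum to `4π`. -/
theorem total_curvature_eq_four_pi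
    (a b c d : EuclideanSpace ℝ (Fin 3))
    (h : AffineIndependent ℝ ![a, b, c, d]) :
    (2 * π - (∠ c a d + ∠ d a b + ∠ b a c)) +
    (2 * π - (∠ d b c + ∠ a b d + ∠ a b c)) +
    (2 * π - (∠ b c d + ∠ d c a + ∠ a c b)) +
    (2 * π - (∠ b d c + ∠ c d a + ∠ a d b)) = 4 * π := by
  have hab : a ≠ b := h.injective.ne (by decide : (0 : Fin 4) ≠ 1)
  have hcd : c ≠ d := h.injective.ne (by decide : (2 : Fin 4) ≠ 3)
  linarith [face_angles_sum_eq_four_pi hab hcd]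
end

section
/- Let a, b, c, d be affinely independent points of EuclideanSpace ℝ (Fin 3). Then it is not the case that at every vertex v ∈ {a,b,c,d} some two of the three face angles incident to v (the angles ∠ x v y over pairs {x,y} of the other three vertices) sum to more than π. -/
open EuclideanGeometry Real

/-! The four faces of a tetrahedron are triangles, so its twelve face angles add up to `4π`.
If at every vertex two of the three face angles already exceeded `π`, the three angles at each
vertex would exceed `π` as well (angles are nonnegative), and the total would exceed `4π`. -/

namespace EuclideanGeometry

variable {V P : Type*} [NormedAddCommGroup V] [InnerProductSpace ℝ V] [MetricSpace P]
  [NormedAddTorsor V P]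

theorem pi_lt_angle_add_angle_add_angle_of_pi_lt_pair {v x y z : P}
    (h : ∠ x v y + ∠ x v z > π ∨ ∠ x v y + ∠ y v z > π ∨ ∠ x v z + ∠ y v z > π) :
    π < ∠ x v y + ∠ x v z + ∠ y v z := by
  have := angle_nonneg x v y
  have := angle_nonneg x v z
  have := angle_nonneg y v z
  rcases h with h | h | h <;> linarith

theorem tetrahedron_face_angle_sum_eq_four_pi {a b c d : P} (hab : a ≠ b) (hac : a ≠ c)
    (hbc : b ≠ c) :
    (∠ b a c + ∠ b a d + ∠ c a d) + (∠ a b c + ∠ a b d + ∠ c b d) +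
      (∠ a c b + ∠ a c d + ∠ b c d) + (∠ a d b + ∠ a d c + ∠ b d c) = 4 * π := by
  have abc := angle_add_angle_add_angle_eq_pi c hab.symm
  have abd := angle_add_angle_add_angle_eq_pi d hab.symm
  have acd := angle_add_angle_add_angle_eq_pi d hac.symm
  have bcd := angle_add_angle_add_angle_eq_pi d hbc.symm
  rw [angle_comm b c a, angle_comm c a b] at abc
  rw [angle_comm b d a, angle_comm d a b] at abd
  rw [angle_comm c d a, angle_comm d a c] at acd
  rw [angle_comm c d b, angle_comm d b c] at bcd
  linarith

end EuclideanGeometry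

/-- It is not possible that at every vertex of a nondegenerate tetrahedron,
some two of the three incident face angles sum to more than `π`. -/
theorem not_all_vertices_fail
    (a b c d : EuclideanSpace ℝ (Fin 3))
    (h : AffineIndependent ℝ ![a, b, c, d]) :
    ¬ ((∠ b a c + ∠ b a d > π ∨ ∠ b a c + ∠ c a d > π ∨ ∠ b a d + ∠ c a d > π) ∧
       (∠ a b c + ∠ a b d > π ∨ ∠ a b c + ∠ c b d > π ∨ ∠ a b d + ∠ c b d > π) ∧
       (∠ a c b + ∠ a c d > π ∨ ∠ a c b + ∠ b c d > π ∨ ∠ a c d + ∠ b c d > π) ∧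
       (∠ a d b + ∠ a d c > π ∨ ∠ a d b + ∠ b d c > π ∨ ∠ a d c + ∠ b d c > π)) := by
  rintro ⟨ha, hb, hc, hd⟩
  have hsum := tetrahedron_face_angle_sum_eq_four_pi (a := a) (b := b) (c := c) (d := d)
    (h.injective.ne (a₁ := 0) (a₂ := 1) (by decide))
    (h.injective.ne (a₁ := 0) (a₂ := 2) (by decide))
    (h.injective.ne (a₁ := 1) (a₂ := 2) (by decide))
  linarith [pi_lt_angle_add_angle_add_angle_of_pi_lt_pair ha,
    pi_lt_angle_add_angle_add_angle_of_pi_lt_pair hb,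
    pi_lt_angle_add_angle_add_angle_of_pi_lt_pair hc,
    pi_lt_angle_add_angle_add_angle_of_pi_lt_pair hd]
end

section
/- Assume moreover: the ordering bA ≤ cA ≤ dA; the failures dA + dC > π (face B fails at d), bA + bD > π (face C fails at b), and cA + cB > π (face D fails at c); and the triangle inequalities bD < bA + bC, cB < cA + cD, dC < dA + dB. Then a contradiction follows (no such twelve angles exist). -/
open Real

/-- Case 3b: with the ordering `bA ≤ cA ≤ dA`, the failures of faces
`B`, `C`, `D` at `d`, `b`, `c` respectively, together with the triangle
inequalities at `b`, `c`, `d`, lead to a contradiction. -/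
theorem case_3b_contradiction
    (aB aC aD bA bC bD cA cB cD dA dB dC : ℝ)
    (haB : 0 < aB) (haC : 0 < aC) (haD : 0 < aD)
    (hbA : 0 < bA) (hbC : 0 < bC) (hbD : 0 < bD)
    (hcA : 0 < cA) (hcB : 0 < cB) (hcD : 0 < cD)
    (hdA : 0 < dA) (hdB : 0 < dB) (hdC : 0 < dC)
    (hA : bA + cA + dA = π) (hB : aB + cB + dB = π)
    (hC : aC + bC + dC = π) (hD : aD + bD + cD = π)
    (hord1 : bA ≤ cA) (hord2 : cA ≤ dA)
    (hfailB : dA + dC > π) (hfailC : bA + bD > π) (hfailD : cA + cB > π)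
    (htri1 : bD < bA + bC) (htri2 : cB < cA + cD) (htri3 : dC < dA + dB) :
    False := by
  linarith [Real.pi_pos]
end

section
/- Assume moreover that the triangle inequality holds strictly at each vertex (each of the three angles at a vertex is strictly less than the sum of the other two, for all twelve such inequalities). Then it is impossible that simultaneously face B fails at d, face C fails at b, and face D fails at c; i.e., one cannot have dA + dC > π, bA + bD > π, and cA + cB > π all at once (no ordering assumption on bA, cA, dA is needed). -/
open Real

/-- With the strict triangle inequality at each vertex, faces `B`, `C`, `D`
cannot simultaneously fail at `d`, `b`, `c` respectively. -/
theorem not_three_failures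
    (aB aC aD bA bC bD cA cB cD dA dB dC : ℝ)
    (haB : 0 < aB) (haC : 0 < aC) (haD : 0 < aD)
    (hbA : 0 < bA) (hbC : 0 < bC) (hbD : 0 < bD)
    (hcA : 0 < cA) (hcB : 0 < cB) (hcD : 0 < cD)
    (hdA : 0 < dA) (hdB : 0 < dB) (hdC : 0 < dC)
    (hA : bA + cA + dA = π) (hB : aB + cB + dB = π)
    (hC : aC + bC + dC = π) (hD : aD + bD + cD = π)
    (ta1 : aB < aC + aD) (ta2 : aC < aB + aD) (ta3 : aD < aB + aC)
    (tb1 : bA < bC + bD) (tb2 : bC < bA + bD) (tb3 : bD < bA + bC)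
    (tc1 : cA < cB + cD) (tc2 : cB < cA + cD) (tc3 : cD < cA + cB)
    (td1 : dA < dB + dC) (td2 : dB < dA + dC) (td3 : dC < dA + dB) :
    ¬ (dA + dC > π ∧ bA + bD > π ∧ cA + cB > π) := by
  rintro ⟨h1, h2, h3⟩
  linarith
end

section
/- The flat-tetrahedron variant of Case 3b: assume the ordering bA ≤ cA ≤ dA; the failures dA + dC > π, bA + bD > π, and cA + cB > π; and the non-strict triangle inequalities bD ≤ bA + bC, cB ≤ cA + cD, dC ≤ dA + dB. Then a contradiction follows (no such twelve angles exist). -/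
open Real

/-- Flat-tetrahedron variant of Case 3b: with the ordering `bA ≤ cA ≤ dA`,
the failures of faces `B`, `C`, `D` at `d`, `b`, `c`, and the non-strict
triangle inequalities at `b`, `c`, `d`, lead to a contradiction. -/
theorem case_3b_flat_contradiction
    (aB aC aD bA bC bD cA cB cD dA dB dC : ℝ)
    (haB : 0 < aB) (haC : 0 < aC) (haD : 0 < aD)
    (hbA : 0 < bA) (hbC : 0 < bC) (hbD : 0 < bD)
    (hcA : 0 < cA) (hcB : 0 < cB) (hcD : 0 < cD)
    (hdA : 0 < dA) (hdB : 0 < dB) (hdC : 0 < dC)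
    (hA : bA + cA + dA = π) (hB : aB + cB + dB = π)
    (hC : aC + bC + dC = π) (hD : aD + bD + cD = π)
    (hord1 : bA ≤ cA) (hord2 : cA ≤ dA)
    (hfailB : dA + dC > π) (hfailC : bA + bD > π) (hfailD : cA + cB > π)
    (htri1 : bD ≤ bA + bC) (htri2 : cB ≤ cA + cD) (htri3 : dC ≤ dA + dB) :
    False := by
  nlinarith [add_pos hbA hcA, Real.pi_pos]
end
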